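/- arXiv:1811.00726 — 9 statements merged into one kernel-verified Lean document; each statement's English description precedes it below -/
import Mathlib

section
/- Let x̂ ∈ ℝⁿ with x̂ ≠ 0, and let b ∈ ℝᵐ. Then there exist A ∈ ℝ^{m×n}, c ∈ ℝⁿ, and π ∈ ℝᵐ such that cᵀx̂ = bᵀπ, Ax̂ ≥ b, Σᵢ πᵢ = 1, Aᵀπ = c, and π ≥ 0. In particular, the inverse optimization problem NLO-SD is always feasible when x̂ ≠ 0. -/
/-- NLO-SD is always feasible when xh ≠ 0. -/
theorem stmt_2 {n m : ℕ} (hm : 0 < m) (xh : Fin n → ℝ) (hx : xh ≠ 0) (b : Fin m → ℝ) :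
    ∃ (A : Matrix (Fin m) (Fin n) ℝ) (c : Fin n → ℝ) (π : Fin m → ℝ),
      (∑ j, c j * xh j = ∑ i, b i * π i) ∧ (∀ i, ∑ j, A i j * xh j ≥ b i) ∧
      (∑ i, π i = 1) ∧ (∀ j, ∑ i, A i j * π i = c j) ∧ (∀ i, 0 ≤ π i) := by
  obtain ⟨jh, hj⟩ : ∃ j, xh j ≠ 0 := by
    by_contra h
    push_neg at h
    exact hx (funext h)
  set i0 : Fin m := ⟨0, hm⟩
  refine ⟨fun i j => if j = jh then b i / xh jh else 0,
    fun j => if j = jh then b i0 / xh jh else 0,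
    fun i => if i = i0 then 1 else 0, ?_, ?_, ?_, ?_, ?_⟩
  · simp [Finset.sum_ite_eq', mul_div_cancel₀ _ hj, mul_comm, mul_div_assoc]
  · intro i
    simp [Finset.sum_ite_eq', div_mul_cancel₀ _ hj]
  · simp [Finset.sum_ite_eq']
  · intro j
    simp [Finset.sum_ite_eq']
  · intro i
    simp only []
    split <;> norm_num
end

section
/- Let x̂ ∈ ℝⁿ with x̂ ≠ 0, b ∈ ℝᵐ, prior rows âᵢ ∈ ℝⁿ, weights ξᵢ > 0, and a norm ‖·‖ with dual norm ‖·‖*. Define fᵢ = ξᵢ|âᵢᵀx̂ − bᵢ|/‖x̂‖* and gᵢ = fᵢ if âᵢᵀx̂ < bᵢ, gᵢ = 0 otherwise. Then the minimum of Σᵢ ξᵢ‖aᵢ − âᵢ‖ over all matrices A (with rows aᵢ) satisfying Ax̂ ≥ b and a_î ᵀ x̂ = b_î for at least one index î equals min_{i*} ( f_{i*} + Σ_{i ≠ i*} gᵢ ), where i* ranges over all indices. -/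
/-!
The problem separates over the rows. For a row `â` and a functional `φ = ⟨·, x̂⟩` whose dual
norm `Nd` is attained at a unit vector `v`, the inequality `|φ u| ≤ Nd * N u` shows that reaching
the hyperplane `φ a = β` costs at least `|φ â - β| / Nd` and reaching the half-space `β ≤ φ a`
at least `(β - φ â)⁺ / Nd`; moving `â` along `v` attains both bounds. The optimum therefore
makes one row `k` active at cost `f k`, keeps every other row merely feasible at cost `g i`,
and minimizes over `k`.
-/

open Finset

theorem isLeast_sum_of_isLeast_rows {ι X : Type*} [Fintype ι] [DecidableEq ι] [Nonempty ι]
    {P Q : ι → X → Prop} (hQP : ∀ i a, Q i a → P i a) {c : ι → X → ℝ} {f g : ι → ℝ}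
    (hf : ∀ i, IsLeast (c i '' {a | Q i a}) (f i))
    (hg : ∀ i, IsLeast (c i '' {a | P i a}) (g i)) :
    IsLeast {r | ∃ A : ι → X, (∀ i, P i (A i)) ∧ (∃ k, Q k (A k)) ∧ r = ∑ i, c i (A i)}
      (univ.inf' univ_nonempty fun k => f k + ∑ i ∈ univ.erase k, g i) := by
  constructor
  · obtain ⟨k, -, hk⟩ :=
      exists_mem_eq_inf' univ_nonempty (fun k => f k + ∑ i ∈ univ.erase k, g i)
    choose a hPa hca using fun i => (hg i).1
    obtain ⟨ak, hQk, hck⟩ := (hf k).1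
    refine ⟨Function.update a k ak, fun i => ?_, ⟨k, by simpa using hQk⟩, ?_⟩
    · rcases eq_or_ne i k with rfl | hik
      · simpa using hQP _ _ hQk
      · simpa [hik] using hPa i
    · rw [hk, ← add_sum_erase _ _ (mem_univ k), Function.update_self, hck]
      refine congrArg _ (sum_congr rfl fun i hi => ?_)
      rw [Function.update_of_ne (ne_of_mem_erase hi), hca]
  · rintro r ⟨A, hP, ⟨k, hQ⟩, rfl⟩
    refine (inf'_le _ (mem_univ k)).trans ?_
    rw [← add_sum_erase _ _ (mem_univ k)]
    exact add_le_add ((hf k).2 ⟨A k, hQ, rfl⟩) (sum_le_sum fun i _ => (hg i).2 ⟨A i, hP i, rfl⟩)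

section DualNorm

variable {E : Type*} [AddCommGroup E] [Module ℝ E] {N : E → ℝ} {φ : E →ₗ[ℝ] ℝ} {Nd : ℝ}

theorem map_zero_of_abs_smul (hN_smul : ∀ (t : ℝ) u, N (t • u) = |t| * N u) : N 0 = 0 := by
  simpa using hN_smul 0 0

theorem nonneg_of_abs_smul_of_pos (hN_smul : ∀ (t : ℝ) u, N (t • u) = |t| * N u)
    (hN_pos : ∀ u, u ≠ 0 → 0 < N u) (u : E) : 0 ≤ N u := by
  rcases eq_or_ne u 0 with rfl | hu
  · exact (map_zero_of_abs_smul hN_smul).ge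
  · exact (hN_pos u hu).le

theorem apply_le_mul_of_mem_upperBounds (hN_smul : ∀ (t : ℝ) u, N (t • u) = |t| * N u)
    (hN_pos : ∀ u, u ≠ 0 → 0 < N u) (hNd : Nd ∈ upperBounds (φ '' {w | N w = 1})) (u : E) :
    φ u ≤ Nd * N u := by
  rcases eq_or_ne u 0 with rfl | hu
  · simp [map_zero_of_abs_smul hN_smul]
  have hNu := hN_pos u hu
  have hunit : N ((N u)⁻¹ • u) = 1 := by
    rw [hN_smul, abs_of_pos (inv_pos.2 hNu), inv_mul_cancel₀ hNu.ne']
  have h := hNd ⟨_, hunit, rfl⟩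
  rwa [map_smul, smul_eq_mul, inv_mul_le_iff₀ hNu, mul_comm] at h

theorem abs_apply_le_mul_of_mem_upperBounds (hN_smul : ∀ (t : ℝ) u, N (t • u) = |t| * N u)
    (hN_pos : ∀ u, u ≠ 0 → 0 < N u) (hNd : Nd ∈ upperBounds (φ '' {w | N w = 1})) (u : E) :
    |φ u| ≤ Nd * N u := by
  have hneg := apply_le_mul_of_mem_upperBounds hN_smul hN_pos hNd (-u)
  rw [map_neg, ← neg_one_smul ℝ u, hN_smul, abs_neg, abs_one, one_mul] at hneg
  exact abs_le.2 ⟨by linarith, apply_le_mul_of_mem_upperBounds hN_smul hN_pos hNd u⟩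

theorem pos_of_mem_upperBounds (hN_smul : ∀ (t : ℝ) u, N (t • u) = |t| * N u)
    (hN_pos : ∀ u, u ≠ 0 → 0 < N u) (hNd : Nd ∈ upperBounds (φ '' {w | N w = 1})) {u : E}
    (hu : φ u ≠ 0) : 0 < Nd :=
  pos_of_mul_pos_left ((abs_pos.2 hu).trans_le
    (abs_apply_le_mul_of_mem_upperBounds hN_smul hN_pos hNd u))
    (nonneg_of_abs_smul_of_pos hN_smul hN_pos u)

theorem exists_apply_eq_add (hN_smul : ∀ (t : ℝ) u, N (t • u) = |t| * N u)
    (hφ : IsGreatest (φ '' {w | N w = 1}) Nd) (hNd : 0 < Nd) (â : E) (c : ℝ) :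
    ∃ a, φ a = φ â + c ∧ N (a - â) = |c| / Nd := by
  obtain ⟨v, hv, hφv⟩ := hφ.1
  refine ⟨â + (c / Nd) • v, ?_, ?_⟩
  · rw [map_add, map_smul, smul_eq_mul, hφv, div_mul_cancel₀ _ hNd.ne']
  · rw [add_sub_cancel_left, hN_smul, show N v = 1 from hv, mul_one, abs_div, abs_of_pos hNd]

theorem isLeast_image_apply_eq (hN_smul : ∀ (t : ℝ) u, N (t • u) = |t| * N u)
    (hN_pos : ∀ u, u ≠ 0 → 0 < N u) (hφ : IsGreatest (φ '' {w | N w = 1}) Nd) (hNd : 0 < Nd)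
    (â : E) (β : ℝ) :
    IsLeast ((fun a => N (a - â)) '' {a | φ a = β}) (|φ â - β| / Nd) := by
  constructor
  · obtain ⟨a, ha, hNa⟩ := exists_apply_eq_add hN_smul hφ hNd â (β - φ â)
    exact ⟨a, by simpa using ha, hNa.trans (by rw [abs_sub_comm])⟩
  · rintro _ ⟨a, rfl, rfl⟩
    rw [div_le_iff₀ hNd, abs_sub_comm, ← map_sub, mul_comm]
    exact abs_apply_le_mul_of_mem_upperBounds hN_smul hN_pos hφ.2 _

theorem isLeast_image_le_apply (hN_smul : ∀ (t : ℝ) u, N (t • u) = |t| * N u)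
    (hN_pos : ∀ u, u ≠ 0 → 0 < N u) (hφ : IsGreatest (φ '' {w | N w = 1}) Nd) (hNd : 0 < Nd)
    (â : E) (β : ℝ) :
    IsLeast ((fun a => N (a - â)) '' {a | β ≤ φ a}) (if φ â < β then |φ â - β| / Nd else 0) := by
  constructor
  · split_ifs with h
    · obtain ⟨a, ha, hNa⟩ := exists_apply_eq_add hN_smul hφ hNd â (β - φ â)
      exact ⟨a, by simp [ha], hNa.trans (by rw [abs_sub_comm])⟩
    · exact ⟨â, not_lt.1 h, by simp [map_zero_of_abs_smul hN_smul]⟩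
  · rintro _ ⟨a, ha, rfl⟩
    split_ifs with h
    · rw [div_le_iff₀ hNd, abs_of_neg (sub_neg.2 h), mul_comm]
      have := apply_le_mul_of_mem_upperBounds hN_smul hN_pos hφ.2 (a - â)
      rw [map_sub] at this
      linarith [show β ≤ φ a from ha]
    · exact nonneg_of_abs_smul_of_pos hN_smul hN_pos _

end DualNorm

theorem stmt_5_general {n m : ℕ} [NeZero m] (xh : Fin n → ℝ) (hx : xh ≠ 0)
    (b : Fin m → ℝ) (ah : Matrix (Fin m) (Fin n) ℝ) (ξ : Fin m → ℝ)
    (hξ : ∀ i, 0 < ξ i)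
    (N : (Fin n → ℝ) → ℝ)
    (hN_smul : ∀ (t : ℝ) u, N (t • u) = |t| * N u)
    (hN_pos : ∀ u, u ≠ 0 → 0 < N u)
    (Nd : ℝ) (v : Fin n → ℝ)
    (hv : N v = 1) (hvmax : ∑ j, xh j * v j = Nd)
    (hNd : ∀ w, N w = 1 → ∑ j, xh j * w j ≤ Nd)
    (f g : Fin m → ℝ)
    (hf : ∀ i, f i = ξ i * |(∑ j, ah i j * xh j) - b i| / Nd)
    (hg : ∀ i, g i = if (∑ j, ah i j * xh j) < b i then f i else 0) :
    IsLeast {r | ∃ A : Matrix (Fin m) (Fin n) ℝ,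
        (∀ i, ∑ j, A i j * xh j ≥ b i) ∧ (∃ ihat, ∑ j, A ihat j * xh j = b ihat) ∧
        r = ∑ i, ξ i * N (A i - ah i)}
      (Finset.univ.inf' Finset.univ_nonempty
        (fun k => f k + ∑ i ∈ Finset.univ.erase k, g i)) := by
  let φ : (Fin n → ℝ) →ₗ[ℝ] ℝ :=
    { toFun := fun u => ∑ j, u j * xh j
      map_add' := fun u w => add_dotProduct u w xh
      map_smul' := fun t u => smul_dotProduct t u xh }
  have hφ : IsGreatest (φ '' {w | N w = 1}) Nd := by
    refine ⟨⟨v, hv, by simpa [φ, mul_comm] using hvmax⟩, ?_⟩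
    rintro _ ⟨w, hw, rfl⟩
    simpa [φ, mul_comm] using hNd w hw
  have hNd0 : 0 < Nd := pos_of_mem_upperBounds hN_smul hN_pos hφ.2 (u := xh)
    (dotProduct_self_eq_zero.not.2 hx)
  have weighted : ∀ i {S : Set (Fin n → ℝ)} {x : ℝ}, IsLeast ((fun a => N (a - ah i)) '' S) x →
      IsLeast ((fun a => ξ i * N (a - ah i)) '' S) (ξ i * x) := fun i _ _ h => by
    simpa [Set.image_image] using (monotone_mul_left_of_nonneg (hξ i).le).map_isLeast h
  refine isLeast_sum_of_isLeast_rows (P := fun i a => b i ≤ φ a) (Q := fun i a => φ a = b i)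
    (c := fun i a => ξ i * N (a - ah i))
    (fun _ _ h => h.ge) (fun i => ?_) (fun i => ?_)
  · rw [hf, mul_div_assoc]
    exact weighted i (isLeast_image_apply_eq hN_smul hN_pos hφ hNd0 (ah i) (b i))
  · rw [hg, hf, mul_div_assoc, ← mul_zero (ξ i), ← mul_ite]
    exact weighted i (isLeast_image_le_apply hN_smul hN_pos hφ hNd0 (ah i) (b i))

/-- Closed-form optimal value of NLO-SD (Theorem on NLO-SD). -/
theorem stmt_5 {n m : ℕ} [NeZero m] (xh : Fin n → ℝ) (hx : xh ≠ 0)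
    (b : Fin m → ℝ) (ah : Matrix (Fin m) (Fin n) ℝ) (ξ : Fin m → ℝ)
    (hξ : ∀ i, 0 < ξ i)
    (N : (Fin n → ℝ) → ℝ)
    (hN_add : ∀ u v, N (u + v) ≤ N u + N v)
    (hN_smul : ∀ (t : ℝ) u, N (t • u) = |t| * N u)
    (hN_pos : ∀ u, u ≠ 0 → 0 < N u)
    (Nd : ℝ) (v : Fin n → ℝ)
    (hv : N v = 1) (hvmax : ∑ j, xh j * v j = Nd)
    (hNd : ∀ w, N w = 1 → ∑ j, xh j * w j ≤ Nd)
    (f g : Fin m → ℝ)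
    (hf : ∀ i, f i = ξ i * |(∑ j, ah i j * xh j) - b i| / Nd)
    (hg : ∀ i, g i = if (∑ j, ah i j * xh j) < b i then f i else 0) :
    IsLeast {r | ∃ A : Matrix (Fin m) (Fin n) ℝ,
        (∀ i, ∑ j, A i j * xh j ≥ b i) ∧ (∃ ihat, ∑ j, A ihat j * xh j = b ihat) ∧
        r = ∑ i, ξ i * N (A i - ah i)}
      (Finset.univ.inf' Finset.univ_nonempty
        (fun k => f k + ∑ i ∈ Finset.univ.erase k, g i)) :=
  stmt_5_general xh hx b ah ξ hξ N hN_smul hN_pos Nd v hv hvmax hNd f g hf hg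
end

section
/- Let Ω ⊆ ℝ^{m×n}, x̂ ∈ ℝⁿ, b ∈ ℝᵐ. For each i, let tᵢ = min over A ∈ Ω with Ax̂ ≥ b of (aᵢᵀx̂ − bᵢ) (assuming the minima exist), and let i* achieve min_i tᵢ with minimizer A*. Then the minimum of cᵀx̂ − bᵀπ over all (A, c, π) with A ∈ Ω, Ax̂ ≥ b, Σᵢπᵢ = 1, Aᵀπ = c, π ≥ 0, equals t_{i*}, and is attained at A = A*, c = a*_{i*}, π = e_{i*}. -/
/-- Solution of NLO-DG via m per-constraint surplus minimizations. -/
theorem stmt_7 {n m : ℕ} (Ω : Set (Matrix (Fin m) (Fin n) ℝ))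
    (xh : Fin n → ℝ) (b : Fin m → ℝ)
    (t : Fin m → ℝ) (AA : Fin m → Matrix (Fin m) (Fin n) ℝ)
    (hfeas : ∀ i, AA i ∈ Ω ∧ (∀ k, ∑ j, (AA i) k j * xh j ≥ b k))
    (ht : ∀ i, t i = ∑ j, (AA i) i j * xh j - b i)
    (hmin : ∀ i, ∀ A ∈ Ω, (∀ k, ∑ j, A k j * xh j ≥ b k) →
        t i ≤ ∑ j, A i j * xh j - b i)
    (istar : Fin m) (histar : ∀ i, t istar ≤ t i) :
    IsLeast {r | ∃ (A : Matrix (Fin m) (Fin n) ℝ) (c : Fin n → ℝ) (π : Fin m → ℝ),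
        A ∈ Ω ∧ (∀ i, ∑ j, A i j * xh j ≥ b i) ∧ (∑ i, π i = 1) ∧
        (∀ j, ∑ i, A i j * π i = c j) ∧ (∀ i, 0 ≤ π i) ∧
        r = (∑ j, c j * xh j) - ∑ i, b i * π i} (t istar) ∧
    (∀ j, ∑ i, (AA istar) i j * ((Pi.single istar 1 : Fin m → ℝ)) i = (AA istar) istar j) ∧
    ((∑ j, (AA istar) istar j * xh j) - ∑ i, b i * ((Pi.single istar 1 : Fin m → ℝ)) i = t istar) := by
  have hsingle : ∀ (f : Fin m → ℝ),
      ∑ i, f i * (Pi.single istar 1 : Fin m → ℝ) i = f istar := by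
    intro f
    rw [Finset.sum_eq_single istar]
    · simp
    · intro i _ hi; simp [Pi.single_apply, hi]
    · simp
  refine ⟨⟨?_, ?_⟩, ?_, ?_⟩
  · refine ⟨AA istar, fun j => (AA istar) istar j, Pi.single istar 1,
      (hfeas istar).1, (hfeas istar).2, ?_, ?_, ?_, ?_⟩
    · simp
    · intro j; exact hsingle _
    · intro i; by_cases h : i = istar <;> simp [Pi.single_apply, h]
    · rw [hsingle b, ht istar]
  · rintro r ⟨A, c, π, hA, hAfeas, hπsum, hc, hπpos, rfl⟩
    have key : (∑ j, c j * xh j) - ∑ i, b i * π i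
        = ∑ i, π i * ((∑ j, A i j * xh j) - b i) := by
      simp only [mul_sub, Finset.sum_sub_distrib, ← hc, Finset.mul_sum]
      congr 1
      · rw [Finset.sum_comm]
        apply Finset.sum_congr rfl; intro j _
        rw [Finset.sum_mul]; apply Finset.sum_congr rfl; intro i _; ring
      · apply Finset.sum_congr rfl; intro i _; ring
    rw [key]
    calc t istar = ∑ i, π i * t istar := by rw [← Finset.sum_mul, hπsum, one_mul]
      _ ≤ ∑ i, π i * ((∑ j, A i j * xh j) - b i) := by
          apply Finset.sum_le_sum; intro i _
          exact mul_le_mul_of_nonneg_left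
            ((histar i).trans (hmin i A hA hAfeas)) (hπpos i)
  · intro j; exact hsingle _
  · rw [hsingle b, ht istar]
end

section
/- Let x̂ ∈ ℝⁿ, A ∈ ℝ^{m×n}, b ∈ ℝᵐ, index sets Jᵢ ⊆ {1,…,n}, and nonnegative uncertainty parameters αᵢⱼ for j ∈ Jᵢ. Suppose (α, c, u, π, λ, μ) satisfies: αᵢⱼ x̂ⱼ + uᵢⱼ ≥ 0 and −αᵢⱼ x̂ⱼ + uᵢⱼ ≥ 0 for all j ∈ Jᵢ, i; Σ_{j∈J} aᵢⱼ x̂ⱼ − Σ_{j∈Jᵢ} uᵢⱼ ≥ bᵢ for all i; αᵢⱼ ≥ 0; Σᵢ πᵢ = 1; cⱼ = Σᵢ aᵢⱼ πᵢ + Σ_{i: j∈Jᵢ} αᵢⱼ(λᵢⱼ − μᵢⱼ); πᵢ = λᵢⱼ + μᵢⱼ; π, λ, μ ≥ 0; and strong duality cᵀx̂ = bᵀπ. Then there exists î such that Σ_{j∈J} a_{îj} x̂ⱼ − Σ_{j∈J_î} α_{îj}|x̂ⱼ| = b_î, and for every i, Σ_{j∈J} aᵢⱼ x̂ⱼ −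 Σ_{j∈Jᵢ} αᵢⱼ|x̂ⱼ| ≥ bᵢ. -/
/-!
Primal feasibility of the linearization gives `αᵢⱼ|x̂ⱼ| ≤ uᵢⱼ`, hence robust feasibility. Weighting the
robust slacks `sᵢ ≥ 0` by `π` and using the dual constraints together with `cᵀx̂ = bᵀπ` gives
`∑ᵢ πᵢ sᵢ = -∑ᵢ ∑_{j ∈ Jᵢ} αᵢⱼ (λᵢⱼ (x̂ⱼ + |x̂ⱼ|) + μᵢⱼ (|x̂ⱼ| - x̂ⱼ)) ≤ 0`. So every `πᵢ sᵢ` vanishes,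
and since `∑ᵢ πᵢ = 1` some `πᵢ` is nonzero, making row `i` active.
-/

open Finset

lemma mul_abs_le_of_nonneg_add {a x u : ℝ} (ha : 0 ≤ a) (h₁ : 0 ≤ a * x + u)
    (h₂ : 0 ≤ -a * x + u) : a * |x| ≤ u := by
  calc a * |x| = |a * x| := by rw [abs_mul, abs_of_nonneg ha]
    _ ≤ u := abs_le.2 ⟨by linarith, by linarith⟩

lemma sub_mul_add_add_mul_abs_nonneg {l m x : ℝ} (hl : 0 ≤ l) (hm : 0 ≤ m) :
    0 ≤ (l - m) * x + (l + m) * |x| := by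
  have hx₁ : 0 ≤ x + |x| := neg_le_iff_add_nonneg.1 (neg_abs_le x)
  have hx₂ : 0 ≤ |x| - x := sub_nonneg.2 (le_abs_self x)
  calc 0 ≤ l * (x + |x|) + m * (|x| - x) := by positivity
    _ = (l - m) * x + (l + m) * |x| := by ring

lemma Finset.exists_eq_zero_of_sum_mul_nonpos {ι : Type*} [Fintype ι] {w s : ι → ℝ}
    (hw : ∀ i, 0 ≤ w i) (hs : ∀ i, 0 ≤ s i) (hw_sum : ∑ i, w i ≠ 0)
    (h : ∑ i, w i * s i ≤ 0) : ∃ i, s i = 0 := by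
  obtain ⟨i, -, hwi⟩ := exists_ne_zero_of_sum_ne_zero hw_sum
  have hzero : ∀ i ∈ univ, w i * s i = 0 :=
    (sum_eq_zero_iff_of_nonneg fun i _ => mul_nonneg (hw i) (hs i)).1
      (h.antisymm (sum_nonneg fun i _ => mul_nonneg (hw i) (hs i)))
  exact ⟨i, (mul_eq_zero.1 (hzero i (mem_univ i))).resolve_left hwi⟩

section RobustCounterpart

variable {ι κ : Type*} [Fintype κ]
  (A : Matrix ι κ ℝ) (J : ι → Finset κ) (α : ι → κ → ℝ)

def robustLhs (x : κ → ℝ) (i : ι) : ℝ :=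
  ∑ j, A i j * x j - ∑ j ∈ J i, α i j * |x j|

variable {A J α}

lemma le_robustLhs_of_linearized {x : κ → ℝ} {u : ι → κ → ℝ} {b : ι → ℝ} {i : ι}
    (hα : ∀ j ∈ J i, 0 ≤ α i j) (h₁ : ∀ j ∈ J i, 0 ≤ α i j * x j + u i j)
    (h₂ : ∀ j ∈ J i, 0 ≤ -α i j * x j + u i j)
    (hb : b i ≤ ∑ j, A i j * x j - ∑ j ∈ J i, u i j) :
    b i ≤ robustLhs A J α x i := by
  have : ∑ j ∈ J i, α i j * |x j| ≤ ∑ j ∈ J i, u i j :=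
    sum_le_sum fun j hj => mul_abs_le_of_nonneg_add (hα j hj) (h₁ j hj) (h₂ j hj)
  unfold robustLhs
  linarith

lemma sum_mul_robustLhs_eq [Fintype ι] [DecidableEq κ] {x c : κ → ℝ} {π : ι → ℝ}
    {lam mu : ι → κ → ℝ}
    (hc : ∀ j, c j = ∑ i, A i j * π i
      + ∑ i ∈ univ.filter (fun i => j ∈ J i), α i j * (lam i j - mu i j))
    (hπ : ∀ i, ∀ j ∈ J i, π i = lam i j + mu i j) :
    ∑ i, π i * robustLhs A J α x i = ∑ j, c j * x j
      - ∑ i, ∑ j ∈ J i, α i j * ((lam i j - mu i j) * x j + (lam i j + mu i j) * |x j|) := by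
  have hA : ∑ j, (∑ i, A i j * π i) * x j = ∑ i, π i * ∑ j, A i j * x j := by
    simp only [sum_mul, mul_sum]
    rw [sum_comm]
    exact sum_congr rfl fun i _ => sum_congr rfl fun j _ => by ring
  have hlm : ∑ j, (∑ i ∈ univ.filter (fun i => j ∈ J i), α i j * (lam i j - mu i j)) * x j
      = ∑ i, ∑ j ∈ J i, α i j * (lam i j - mu i j) * x j := by
    simp only [sum_mul]
    exact sum_comm' fun i j => by simp
  have habs : ∑ i, π i * ∑ j ∈ J i, α i j * |x j|
      = ∑ i, ∑ j ∈ J i, (lam i j + mu i j) * (α i j * |x j|) :=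
    sum_congr rfl fun i _ => by
      rw [mul_sum]
      exact sum_congr rfl fun j hj => by rw [hπ i j hj]
  have hcx : ∑ j, c j * x j
      = ∑ i, π i * ∑ j, A i j * x j + ∑ i, ∑ j ∈ J i, α i j * (lam i j - mu i j) * x j := by
    rw [← hA, ← hlm, ← sum_add_distrib]
    exact sum_congr rfl fun j _ => by rw [hc j, add_mul]
  have hsplit : ∑ i, ∑ j ∈ J i, α i j * ((lam i j - mu i j) * x j + (lam i j + mu i j) * |x j|)
      = ∑ i, ∑ j ∈ J i, α i j * (lam i j - mu i j) * x j
        + ∑ i, ∑ j ∈ J i, (lam i j + mu i j) * (α i j * |x j|) := by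
    rw [← sum_add_distrib]
    exact sum_congr rfl fun i _ => by
      rw [← sum_add_distrib]
      exact sum_congr rfl fun j _ => by ring
  simp only [robustLhs, mul_sub, sum_sub_distrib]
  linarith

end RobustCounterpart

/-- A feasible solution of RLO-IU-SD makes xh robust feasible with at least one
robust constraint active. -/
theorem stmt_11 {n m : ℕ} (xh : Fin n → ℝ) (A : Matrix (Fin m) (Fin n) ℝ)
    (b : Fin m → ℝ) (J : Fin m → Finset (Fin n))
    (α u lam mu : Fin m → Fin n → ℝ) (c : Fin n → ℝ) (π : Fin m → ℝ)
    (hp1 : ∀ i, ∀ j ∈ J i, α i j * xh j + u i j ≥ 0)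
    (hp2 : ∀ i, ∀ j ∈ J i, -(α i j) * xh j + u i j ≥ 0)
    (hp3 : ∀ i, (∑ j, A i j * xh j) - ∑ j ∈ J i, u i j ≥ b i)
    (hα : ∀ i, ∀ j ∈ J i, 0 ≤ α i j)
    (hnorm : ∑ i, π i = 1)
    (hd1 : ∀ j, c j = (∑ i, A i j * π i)
        + ∑ i ∈ Finset.univ.filter (fun i => j ∈ J i), α i j * (lam i j - mu i j))
    (hd2 : ∀ i, ∀ j ∈ J i, π i = lam i j + mu i j)
    (hπ : ∀ i, 0 ≤ π i)
    (hlm : ∀ i, ∀ j ∈ J i, 0 ≤ lam i j ∧ 0 ≤ mu i j)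
    (hsd : ∑ j, c j * xh j = ∑ i, b i * π i) :
    (∃ ihat, (∑ j, A ihat j * xh j) - ∑ j ∈ J ihat, α ihat j * |xh j| = b ihat) ∧
    (∀ i, (∑ j, A i j * xh j) - ∑ j ∈ J i, α i j * |xh j| ≥ b i) := by
  have hfeas : ∀ i, b i ≤ robustLhs A J α xh i := fun i =>
    le_robustLhs_of_linearized (hα i) (hp1 i) (hp2 i) (hp3 i)
  have hgap : 0 ≤ ∑ i, ∑ j ∈ J i,
      α i j * ((lam i j - mu i j) * xh j + (lam i j + mu i j) * |xh j|) :=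
    sum_nonneg fun i _ => sum_nonneg fun j hj =>
      mul_nonneg (hα i j hj) (sub_mul_add_add_mul_abs_nonneg (hlm i j hj).1 (hlm i j hj).2)
  have hslack : ∑ i, π i * (robustLhs A J α xh i - b i) ≤ 0 := by
    have hbπ : ∑ i, π i * b i = ∑ j, c j * xh j := by
      rw [hsd]
      exact sum_congr rfl fun i _ => mul_comm _ _
    simp only [mul_sub, sum_sub_distrib, sum_mul_robustLhs_eq hd1 hd2, hbπ]
    linarith
  obtain ⟨i, hi⟩ := exists_eq_zero_of_sum_mul_nonpos hπ (fun i => sub_nonneg.2 (hfeas i))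
    (hnorm ▸ one_ne_zero) hslack
  exact ⟨⟨i, sub_eq_zero.1 hi⟩, hfeas⟩
end

section
/- Let x̂ ∈ ℝⁿ, A ∈ ℝ^{m×n}, b ∈ ℝᵐ, index sets Jᵢ ⊆ {1,…,n}. Suppose there exists î and ĵ ∈ J_î with x̂_ĵ ≠ 0. Then the inverse robust problem RLO-IU-SD is feasible if and only if Σ_{j} aᵢⱼ x̂ⱼ ≥ bᵢ for all i (i.e., x̂ is feasible for the nominal problem). -/
/-!
Robust feasibility implies nominal feasibility because the auxiliary variables `u i j` dominate
`|α i j * xh j| ≥ 0`. Conversely, loading the whole slack of row `ihat` onto the single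
uncertainty parameter `α ihat jhat = slack / |xh jhat|` makes that robust constraint active, and
the dual vector concentrated on row `ihat` then certifies optimality of `xh` for the cost it
induces.
-/

open Finset

/-- Optimality conditions for `xh` in the linearization of the robust problem, where `u i j`
bounds `|α i j * xh j|`: primal feasibility, dual feasibility of `(π, lam, mu)` for the cost `c`,
and equality of the objective values. -/
def RobustOptimalityCertificate {n m : ℕ} (xh : Fin n → ℝ) (A : Matrix (Fin m) (Fin n) ℝ)
    (b : Fin m → ℝ) (J : Fin m → Finset (Fin n)) (α u lam mu : Fin m → Fin n → ℝ)
    (c : Fin n → ℝ) (π : Fin m → ℝ) : Prop :=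
  (∑ j, c j * xh j = ∑ i, b i * π i) ∧
  (∀ i, ∀ j ∈ J i, α i j * xh j + u i j ≥ 0) ∧
  (∀ i, ∀ j ∈ J i, -(α i j) * xh j + u i j ≥ 0) ∧
  (∀ i, (∑ j, A i j * xh j) - ∑ j ∈ J i, u i j ≥ b i) ∧
  (∀ i, ∀ j ∈ J i, 0 ≤ α i j) ∧
  (∑ i, π i = 1) ∧
  (∀ j, c j = (∑ i, A i j * π i)
    + ∑ i ∈ univ.filter (fun i => j ∈ J i), α i j * (lam i j - mu i j)) ∧
  (∀ i, ∀ j ∈ J i, π i = lam i j + mu i j) ∧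
  (∀ i, 0 ≤ π i) ∧ (∀ i, ∀ j ∈ J i, 0 ≤ lam i j ∧ 0 ≤ mu i j)

section

variable {n m : ℕ} {xh : Fin n → ℝ} {A : Matrix (Fin m) (Fin n) ℝ} {b : Fin m → ℝ}
  {J : Fin m → Finset (Fin n)}

theorem RobustOptimalityCertificate.nominal_feasible {α u lam mu : Fin m → Fin n → ℝ}
    {c : Fin n → ℝ} {π : Fin m → ℝ}
    (h : RobustOptimalityCertificate xh A b J α u lam mu c π) (i : Fin m) :
    ∑ j, A i j * xh j ≥ b i := by
  obtain ⟨-, hpos, hneg, hrow, -⟩ := h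
  have hu : 0 ≤ ∑ j ∈ J i, u i j :=
    sum_nonneg fun j hj => by linarith [hpos i j hj, hneg i j hj]
  linarith [hrow i]

theorem robustOptimalityCertificate_of_active {α : Fin m → Fin n → ℝ} {π : Fin m → ℝ}
    (hα : ∀ i, ∀ j ∈ J i, 0 ≤ α i j) (hπ : 0 ≤ π) (hπ_sum : ∑ i, π i = 1)
    (hfeas : ∀ i, ∑ j, A i j * xh j - ∑ j ∈ J i, α i j * |xh j| ≥ b i)
    (hactive : ∀ i, π i * (∑ j, A i j * xh j - ∑ j ∈ J i, α i j * |xh j| - b i) = 0) :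
    ∃ (u lam mu : Fin m → Fin n → ℝ) (c : Fin n → ℝ),
      RobustOptimalityCertificate xh A b J α u lam mu c π := by
  -- `lam - mu = -π · sign xh`, so the dual term of `c` contributes `-π · α · |xh|`.
  set lam : Fin m → Fin n → ℝ := fun i j => if xh j < 0 then π i else 0
  set mu : Fin m → Fin n → ℝ := fun i j => if xh j < 0 then 0 else π i
  have hlam_mu : ∀ i j, (lam i j - mu i j) * xh j = -(π i * |xh j|) := by
    intro i j
    by_cases hx : xh j < 0
    · simp [lam, mu, hx, abs_of_neg hx]
    · simp [lam, mu, hx, abs_of_nonneg (not_lt.mp hx)]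
  refine ⟨fun i j => α i j * |xh j|, lam, mu, fun j => (∑ i, A i j * π i)
    + ∑ i ∈ univ.filter (fun i => j ∈ J i), α i j * (lam i j - mu i j),
    ?_, ?_, ?_, hfeas, hα, hπ_sum, fun _ => rfl, ?_, hπ, ?_⟩
  · have hnominal : ∑ j, (∑ i, A i j * π i) * xh j = ∑ i, π i * ∑ j, A i j * xh j := by
      simp only [sum_mul, mul_sum]
      rw [sum_comm]
      exact sum_congr rfl fun i _ => sum_congr rfl fun j _ => by ring
    have hrobust : ∑ j, (∑ i ∈ univ.filter (fun i => j ∈ J i), α i j * (lam i j - mu i j)) * xh j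
        = -∑ i, π i * ∑ j ∈ J i, α i j * |xh j| := by
      simp only [sum_mul, mul_sum, ← sum_neg_distrib]
      rw [sum_comm' (t' := univ) (s' := J) (by simp)]
      exact sum_congr rfl fun i _ => sum_congr rfl fun j _ => by rw [mul_assoc, hlam_mu]; ring
    calc ∑ j, ((∑ i, A i j * π i)
            + ∑ i ∈ univ.filter (fun i => j ∈ J i), α i j * (lam i j - mu i j)) * xh j
        = ∑ i, π i * (∑ j, A i j * xh j - ∑ j ∈ J i, α i j * |xh j|) := by
          simp only [add_mul, sum_add_distrib]
          rw [hnominal, hrobust]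
          simp only [mul_sub, sum_sub_distrib]
          ring
      _ = ∑ i, b i * π i := sum_congr rfl fun i _ => by linarith [hactive i]
  · intro i j hj
    nlinarith [neg_abs_le (xh j), hα i j hj]
  · intro i j hj
    nlinarith [le_abs_self (xh j), hα i j hj]
  · intro i j _
    by_cases hx : xh j < 0 <;> simp [lam, mu, hx]
  · intro i j _
    by_cases hx : xh j < 0 <;> simpa [lam, mu, hx] using hπ i

theorem exists_robust_weights_active (hnom : ∀ i, ∑ j, A i j * xh j ≥ b i) {ihat : Fin m}
    {jhat : Fin n} (hj : jhat ∈ J ihat) (hx : xh jhat ≠ 0) :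
    ∃ α : Fin m → Fin n → ℝ, 0 ≤ α ∧
      (∀ i, ∑ j, A i j * xh j - ∑ j ∈ J i, α i j * |xh j| ≥ b i) ∧
      ∑ j, A ihat j * xh j - ∑ j ∈ J ihat, α ihat j * |xh j| = b ihat := by
  set slack := ∑ j, A ihat j * xh j - b ihat
  have hslack : 0 ≤ slack := sub_nonneg.2 (hnom ihat)
  have habs : 0 < |xh jhat| := abs_pos.2 hx
  set α : Fin m → Fin n → ℝ := Pi.single ihat (Pi.single jhat (slack / |xh jhat|))
  have hα : 0 ≤ α := Pi.single_nonneg.2 (Pi.single_nonneg.2 (div_nonneg hslack habs.le))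
  have hterm : ∀ i, ∑ j ∈ J i, α i j * |xh j| = if i = ihat then slack else 0 := by
    intro i
    rcases eq_or_ne i ihat with rfl | hi
    · simp [α, Pi.single_apply, hj, habs.ne']
    · simp [α, hi]
  refine ⟨α, hα, fun i => ?_, ?_⟩
  · rw [hterm]
    split_ifs with hi
    · subst hi; simp [slack]
    · simpa using hnom i
  · simp [hterm, slack]

end

/-- Feasibility of RLO-IU-SD is equivalent to nominal feasibility of xh. -/
theorem stmt_12 {n m : ℕ} (xh : Fin n → ℝ) (A : Matrix (Fin m) (Fin n) ℝ)
    (b : Fin m → ℝ) (J : Fin m → Finset (Fin n))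
    (hx : ∃ ihat : Fin m, ∃ jhat ∈ J ihat, xh jhat ≠ 0) :
    (∃ (α u lam mu : Fin m → Fin n → ℝ) (c : Fin n → ℝ) (π : Fin m → ℝ),
        (∑ j, c j * xh j = ∑ i, b i * π i) ∧
        (∀ i, ∀ j ∈ J i, α i j * xh j + u i j ≥ 0) ∧
        (∀ i, ∀ j ∈ J i, -(α i j) * xh j + u i j ≥ 0) ∧
        (∀ i, (∑ j, A i j * xh j) - ∑ j ∈ J i, u i j ≥ b i) ∧
        (∀ i, ∀ j ∈ J i, 0 ≤ α i j) ∧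
        (∑ i, π i = 1) ∧
        (∀ j, c j = (∑ i, A i j * π i)
          + ∑ i ∈ Finset.univ.filter (fun i => j ∈ J i), α i j * (lam i j - mu i j)) ∧
        (∀ i, ∀ j ∈ J i, π i = lam i j + mu i j) ∧
        (∀ i, 0 ≤ π i) ∧ (∀ i, ∀ j ∈ J i, 0 ≤ lam i j ∧ 0 ≤ mu i j)) ↔
      (∀ i, ∑ j, A i j * xh j ≥ b i) := by
  change (∃ α u lam mu c π, RobustOptimalityCertificate xh A b J α u lam mu c π) ↔ _
  refine ⟨fun ⟨_, _, _, _, _, _, h⟩ => h.nominal_feasible, fun hnom => ?_⟩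
  obtain ⟨ihat, jhat, hj, hxj⟩ := hx
  obtain ⟨α, hα, hfeas, hactive⟩ := exists_robust_weights_active hnom hj hxj
  have hπ_active : ∀ i, (Pi.single ihat 1 : Fin m → ℝ) i *
      (∑ j, A i j * xh j - ∑ j ∈ J i, α i j * |xh j| - b i) = 0 := by
    intro i
    rcases eq_or_ne i ihat with rfl | hi
    · simp [hactive]
    · simp [hi]
  obtain ⟨u, lam, mu, c, h⟩ := robustOptimalityCertificate_of_active (π := Pi.single ihat 1)
    (fun i j _ => hα i j) (Pi.single_nonneg.2 zero_le_one) (by simp) hfeas hπ_active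
  exact ⟨α, u, lam, mu, c, _, h⟩
end

section
/- Let û ∈ ℝ^J with ûⱼ = αⱼ|x̂ⱼ| ≥ 0, and Γ ∈ [0, |J|]. Consider the linear program: minimize Σⱼ yⱼ + Γz over (u, y, z) subject to yⱼ + z ≥ uⱼ, −uⱼ ≤ αⱼx̂ⱼ ≤ uⱼ, yⱼ ≥ 0, z ≥ 0. Then an optimal solution is uⱼ* = αⱼ|x̂ⱼ|, z* = the ⌈Γ⌉-th largest value among {αⱼ|x̂ⱼ|}, yⱼ* = max{uⱼ* − z*, 0}, and the optimal objective value equals Σ_{k=1}^{⌊Γ⌋} w_{jₖ} + (Γ − ⌊Γ⌋) w_{j_{⌈Γ⌉}}, where w_{jₖ} denotes the k-th largest element of {αⱼ|x̂ⱼ|}. -/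
/-!
Fix `z`. The cheapest `u, y` for it are `u = û` and `y = (û - z)⁺`, so the LP value is
`min_z (∑ₖ (W k - z)⁺ + Γ z)`, with `W` the weights sorted decreasingly. Writing
`Γ = n + θ` with `n = ⌈Γ⌉ - 1` and `θ ∈ (0, 1]`, for every `z` the sum dominates
`∑_{k<n} (W k - z) + θ (W n - z)`, which gives the lower bound; at `z = W n` the positive
parts are exactly the first `n` terms, so the bound is attained.
-/

open Finset

lemma abs_mul_eq_mul_abs_of_nonneg {a b : ℝ} (h : 0 ≤ a * |b|) : |a * b| = a * |b| := by
  rcases eq_or_ne b 0 with rfl | hb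
  · simp
  · rw [abs_mul, abs_of_nonneg (nonneg_of_mul_nonneg_left h (abs_pos.mpr hb))]

lemma sum_univ_comp_eq_sum_range_of_perm {M β : Type*} [AddCommMonoid β] {N : ℕ}
    (g : M → β) (u : Fin N → M) (W : ℕ → M) (e : Equiv.Perm (Fin N))
    (hW : ∀ k : Fin N, W k = u (e k)) :
    ∑ j, g (u j) = ∑ k ∈ range N, g (W k) := by
  rw [← Fin.sum_univ_eq_sum_range, ← Equiv.sum_comp e]
  simp only [hW]

lemma Antitone.nonneg_of_eventually_eq_zero {W : ℕ → ℝ} (hW : Antitone W) {N : ℕ}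
    (hW0 : ∀ k, N ≤ k → W k = 0) (k : ℕ) : 0 ≤ W k :=
  hW0 _ (le_max_right k N) ▸ hW (le_max_left k N)

lemma max_abs_sub_le_of_le {a u y z : ℝ} (hyz : y + z ≥ u) (hua : -u ≤ a) (hau : a ≤ u)
    (hy : 0 ≤ y) : max (|a| - z) 0 ≤ y :=
  max_le (by linarith [abs_le.mpr ⟨hua, hau⟩]) hy

lemma sum_range_add_mul_le_sum_range_max (f : ℕ → ℝ) {n N : ℕ} {θ : ℝ}
    (hθ0 : 0 ≤ θ) (hθ1 : θ ≤ 1) (hnN : n < N) :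
    ∑ k ∈ range n, f k + θ * f n ≤ ∑ k ∈ range N, max (f k) 0 := by
  have hθf : θ * f n ≤ max (f n) 0 :=
    (mul_le_mul_of_nonneg_left (le_max_left _ _) hθ0).trans
      (mul_le_of_le_one_left (le_max_right _ _) hθ1)
  calc ∑ k ∈ range n, f k + θ * f n
      ≤ ∑ k ∈ range (n + 1), max (f k) 0 := by
        rw [sum_range_succ]
        exact add_le_add (sum_le_sum fun k _ => le_max_left _ _) hθf
    _ ≤ ∑ k ∈ range N, max (f k) 0 :=
        sum_le_sum_of_subset_of_nonneg (range_subset_range.mpr hnN)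
          fun _ _ _ => le_max_right _ _

lemma sum_range_add_mul_le_sum_range_max_sub_add_mul (W : ℕ → ℝ) (z : ℝ) {n N : ℕ} {Γ : ℝ}
    (hnΓ : n ≤ Γ) (hΓn : Γ ≤ n + 1) (hnN : n < N) :
    ∑ k ∈ range n, W k + (Γ - n) * W n ≤ ∑ k ∈ range N, max (W k - z) 0 + Γ * z := by
  have h := sum_range_add_mul_le_sum_range_max (fun k => W k - z)
    (sub_nonneg.mpr hnΓ) (by linarith) hnN
  rw [sum_sub_distrib, sum_const, card_range, nsmul_eq_mul] at h
  linarith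

lemma Antitone.sum_range_max_sub_eq {W : ℕ → ℝ} (hW : Antitone W) {m N : ℕ} (hmN : m ≤ N) :
    ∑ k ∈ range N, max (W k - W m) 0 = ∑ k ∈ range m, (W k - W m) := by
  rw [range_eq_Ico, ← sum_Ico_consecutive _ (Nat.zero_le m) hmN, ← range_eq_Ico]
  have head : ∀ k ∈ range m, max (W k - W m) 0 = W k - W m := fun k hk =>
    max_eq_left (sub_nonneg.mpr (hW (mem_range.mp hk).le))
  have tail : ∀ k ∈ Ico m N, max (W k - W m) 0 = 0 := fun k hk =>
    max_eq_right (sub_nonpos.mpr (hW (mem_Ico.mp hk).1))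
  rw [sum_congr rfl head, sum_eq_zero tail, add_zero]

lemma Antitone.sum_range_max_sub_add_mul_eq {W : ℕ → ℝ} (hW : Antitone W) {n N : ℕ}
    (hnN : n ≤ N) (Γ : ℝ) :
    ∑ k ∈ range N, max (W k - W n) 0 + Γ * W n = ∑ k ∈ range n, W k + (Γ - n) * W n := by
  rw [hW.sum_range_max_sub_eq hnN, sum_sub_distrib, sum_const, card_range, nsmul_eq_mul]
  ring

lemma le_and_le_add_one_of_ceil_eq_add_one {Γ : ℝ} {n : ℕ} (hn : ⌈Γ⌉₊ = n + 1) :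
    (n : ℝ) ≤ Γ ∧ Γ ≤ n + 1 := by
  have hlt := Nat.ceil_lt_add_one (Nat.ceil_pos.mp (by omega)).le (a := Γ)
  have hle := Nat.le_ceil Γ
  rw [hn] at hlt hle
  push_cast at hlt hle
  constructor <;> linarith

/-- When `Γ` is an integer the last term of the left side is `0 * W n`, and on the right the
full term `1 * W n` appears instead. -/
lemma sum_range_floor_add_mul_eq_of_ceil_eq_add_one (W : ℕ → ℝ) {Γ : ℝ} {n : ℕ}
    (hn : ⌈Γ⌉₊ = n + 1) :
    ∑ k ∈ range ⌊Γ⌋₊, W k + (Γ - ⌊Γ⌋₊) * W n = ∑ k ∈ range n, W k + (Γ - n) * W n := by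
  have hfloor : ⌊Γ⌋₊ = n ∨ ⌊Γ⌋₊ = n + 1 := by
    have := Nat.floor_le_ceil Γ
    have := Nat.ceil_le_floor_add_one Γ
    omega
  rcases hfloor with h | h
  · rw [h]
  · have hΓ : Γ = n + 1 := by
      have hle : Γ ≤ (n + 1 : ℕ) := hn ▸ Nat.le_ceil Γ
      have hge : ((n + 1 : ℕ) : ℝ) ≤ Γ := h ▸ Nat.floor_le (Nat.ceil_pos.mp (by omega)).le
      push_cast at hle hge
      linarith
    rw [h, sum_range_succ, hΓ]
    push_cast
    ring

theorem stmt_15_general {N : ℕ} (α xh : Fin N → ℝ) (Γ : ℝ) (W : ℕ → ℝ)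
    (e : Equiv.Perm (Fin N))
    (hW : ∀ k : Fin N, W (k : ℕ) = α (e k) * |xh (e k)|)
    (hW0 : ∀ k, N ≤ k → W k = 0)
    (hsort : ∀ k l, k ≤ l → W l ≤ W k)
    (hΓN : Γ ≤ (N : ℝ)) (hceil : 1 ≤ ⌈Γ⌉₊) :
    IsLeast {r | ∃ (u y : Fin N → ℝ) (z : ℝ),
        (∀ j, y j + z ≥ u j) ∧ (∀ j, -(u j) ≤ α j * xh j) ∧ (∀ j, α j * xh j ≤ u j) ∧
        (∀ j, 0 ≤ y j) ∧ 0 ≤ z ∧ r = (∑ j, y j) + Γ * z}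
      ((∑ k ∈ Finset.range ⌊Γ⌋₊, W k) + (Γ - (⌊Γ⌋₊ : ℝ)) * W (⌈Γ⌉₊ - 1)) ∧
    (let u : Fin N → ℝ := fun j => α j * |xh j|
     let z : ℝ := W (⌈Γ⌉₊ - 1)
     let y : Fin N → ℝ := fun j => max (u j - z) 0
     (∀ j, y j + z ≥ u j) ∧ (∀ j, -(u j) ≤ α j * xh j) ∧ (∀ j, α j * xh j ≤ u j) ∧
     (∀ j, 0 ≤ y j) ∧ 0 ≤ z ∧
     (∑ j, y j) + Γ * z
       = (∑ k ∈ Finset.range ⌊Γ⌋₊, W k) + (Γ - (⌊Γ⌋₊ : ℝ)) * W (⌈Γ⌉₊ - 1)) := by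
  obtain ⟨n, hn⟩ : ∃ n, ⌈Γ⌉₊ = n + 1 := ⟨_, (Nat.succ_pred_eq_of_pos hceil).symm⟩
  obtain ⟨hnΓ, hΓn⟩ := le_and_le_add_one_of_ceil_eq_add_one hn
  have hnN : n < N := by have := Nat.ceil_le.mpr hΓN; omega
  have hWpos : ∀ k, 0 ≤ W k := Antitone.nonneg_of_eventually_eq_zero hsort hW0
  have hu : ∀ j, α j * |xh j| = |α j * xh j| := fun j => by
    have := hW (e.symm j)
    rw [Equiv.apply_symm_apply] at this
    exact (abs_mul_eq_mul_abs_of_nonneg (this ▸ hWpos _)).symm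
  have hsum : ∀ z, ∑ j, max (α j * |xh j| - z) 0 = ∑ k ∈ range N, max (W k - z) 0 := fun z =>
    sum_univ_comp_eq_sum_range_of_perm (fun t => max (t - z) 0) _ W e hW
  have hopt : ∑ j, max (α j * |xh j| - W n) 0 + Γ * W n
      = ∑ k ∈ range ⌊Γ⌋₊, W k + (Γ - ⌊Γ⌋₊) * W n := by
    rw [hsum, Antitone.sum_range_max_sub_add_mul_eq hsort hnN.le,
      sum_range_floor_add_mul_eq_of_ceil_eq_add_one W hn]
  rw [hn, Nat.add_sub_cancel]
  simp only [hu] at hsum hopt ⊢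
  have hcover := fun j => sub_le_iff_le_add.mp (le_max_left (|α j * xh j| - W n) 0)
  have hy0 := fun j => le_max_right (|α j * xh j| - W n) 0
  refine ⟨⟨⟨_, _, _, hcover, fun j => neg_abs_le _, fun j => le_abs_self _, hy0, hWpos n,
    hopt.symm⟩, ?_⟩, hcover, fun j => neg_abs_le _, fun j => le_abs_self _, hy0, hWpos n, hopt⟩
  rintro r ⟨u, y, z, hyz, hul, hur, hy0, -, rfl⟩
  calc ∑ k ∈ range ⌊Γ⌋₊, W k + (Γ - ⌊Γ⌋₊) * W n
      = ∑ k ∈ range n, W k + (Γ - n) * W n :=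
        sum_range_floor_add_mul_eq_of_ceil_eq_add_one W hn
    _ ≤ ∑ k ∈ range N, max (W k - z) 0 + Γ * z :=
        sum_range_add_mul_le_sum_range_max_sub_add_mul W z hnΓ hΓn hnN
    _ ≤ ∑ j, y j + Γ * z := by
        rw [← hsum]
        gcongr with j
        exact max_abs_sub_le_of_le (hyz j) (hul j) (hur j) (hy0 j)

/-- Auxiliary LP computing the Bertsimas–Sim protection function value. -/
theorem stmt_15 {N : ℕ} (α xh : Fin N → ℝ) (Γ : ℝ) (W : ℕ → ℝ)
    (e : Equiv.Perm (Fin N))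
    (hW : ∀ k : Fin N, W (k : ℕ) = α (e k) * |xh (e k)|)
    (hW0 : ∀ k, N ≤ k → W k = 0)
    (hsort : ∀ k l, k ≤ l → W l ≤ W k)
    (hΓ0 : 0 ≤ Γ) (hΓN : Γ ≤ (N : ℝ)) (hceil : 1 ≤ ⌈Γ⌉₊) :
    IsLeast {r | ∃ (u y : Fin N → ℝ) (z : ℝ),
        (∀ j, y j + z ≥ u j) ∧ (∀ j, -(u j) ≤ α j * xh j) ∧ (∀ j, α j * xh j ≤ u j) ∧
        (∀ j, 0 ≤ y j) ∧ 0 ≤ z ∧ r = (∑ j, y j) + Γ * z}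
      ((∑ k ∈ Finset.range ⌊Γ⌋₊, W k) + (Γ - (⌊Γ⌋₊ : ℝ)) * W (⌈Γ⌉₊ - 1)) ∧
    (let u : Fin N → ℝ := fun j => α j * |xh j|
     let z : ℝ := W (⌈Γ⌉₊ - 1)
     let y : Fin N → ℝ := fun j => max (u j - z) 0
     (∀ j, y j + z ≥ u j) ∧ (∀ j, -(u j) ≤ α j * xh j) ∧ (∀ j, α j * xh j ≤ u j) ∧
     (∀ j, 0 ≤ y j) ∧ 0 ≤ z ∧
     (∑ j, y j) + Γ * z
       = (∑ k ∈ Finset.range ⌊Γ⌋₊, W k) + (Γ - (⌊Γ⌋₊ : ℝ)) * W (⌈Γ⌉₊ - 1)) :=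
  stmt_15_general α xh Γ W e hW hW0 hsort hΓN hceil
end

section
/- Under the same setup, suppose 0 ≤ aᵀx̂ − b ≤ Σ_{j∈J'} αⱼ|x̂ⱼ|. Then the optimal value of the linear program min{ Σ_{j∈J'} wⱼ : 0 ≤ wⱼ ≤ 1, Σ_{j∈J'} αⱼ|x̂ⱼ| wⱼ = aᵀx̂ − b } equals the smallest Γ ∈ [0, |J'|] satisfying P(Γ) = aᵀx̂ − b, where P is the protection function defined by the sorted values w₁ ≥ w₂ ≥ … of {αⱼ|x̂ⱼ|} as P(Γ) = Σ_{k=1}^{⌊Γ⌋} w_k + (Γ − ⌊Γ⌋) w_{⌈Γ⌉}. -/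
/-!
Spending a budget `Γ` greedily on the coordinates `0, 1, 2, …`, each capped at `1`, gives the
vector `greedyFill Γ`, and `P(Γ) = ∑ₖ wₖ · greedyFill Γ k`. Hence `P` is monotone when `w ≥ 0`,
and the LP reaches the value `P(Γ)` at cost `Γ`. Conversely, for sorted `w` an exchange argument
gives `∑ₖ wₖ vₖ ≤ P(∑ₖ vₖ)` for every `v ∈ [0,1]ᴺ`, so an LP point of cost `r < Γ̲` would have
`P(r) = aᵀx̂ − b`, squeezed between `P(Γ̲)` and its LP value, contradicting the minimality of `Γ̲`.
-/

/-- The protection function P(Γ) of the cardinality constrained uncertainty set. -/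
noncomputable def protFn (w : ℕ → ℝ) (Γ : ℝ) : ℝ :=
  (∑ k ∈ Finset.range ⌊Γ⌋₊, w k) + (Γ - (⌊Γ⌋₊ : ℝ)) * w ⌊Γ⌋₊

open Finset

noncomputable def greedyFill (Γ : ℝ) (k : ℕ) : ℝ :=
  max 0 (min 1 (Γ - k))

section greedyFill

variable {Γ : ℝ} {k : ℕ}

theorem greedyFill_mem_Icc : greedyFill Γ k ∈ Set.Icc 0 1 :=
  ⟨le_max_left _ _, max_le zero_le_one (min_le_left _ _)⟩

theorem greedyFill_mono_left (k : ℕ) : Monotone (greedyFill · k) := fun x y hxy => by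
  simp only [greedyFill]
  gcongr

theorem greedyFill_of_lt_floor (hk : k < ⌊Γ⌋₊) : greedyFill Γ k = 1 := by
  have : ((k + 1 : ℕ) : ℝ) ≤ Γ := (Nat.le_floor_iff' k.succ_ne_zero).1 hk
  push_cast at this
  unfold greedyFill
  rw [min_eq_left (by linarith), max_eq_right zero_le_one]

theorem greedyFill_floor (hΓ : 0 ≤ Γ) : greedyFill Γ ⌊Γ⌋₊ = Γ - ⌊Γ⌋₊ := by
  have h₁ := Nat.floor_le hΓ
  have h₂ := Nat.lt_floor_add_one Γ
  unfold greedyFill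
  rw [min_eq_right (by linarith), max_eq_right (by linarith)]

theorem greedyFill_of_floor_lt (hk : ⌊Γ⌋₊ < k) : greedyFill Γ k = 0 := by
  have h₁ := Nat.lt_floor_add_one Γ
  have h₂ : (⌊Γ⌋₊ : ℝ) + 1 ≤ k := by exact_mod_cast hk
  unfold greedyFill
  rw [max_eq_left (by linarith [min_le_right 1 (Γ - k)])]

end greedyFill

theorem sum_range_mul_greedyFill {Γ : ℝ} {N : ℕ} (hΓ0 : 0 ≤ Γ) (hΓN : Γ ≤ N) (f : ℕ → ℝ) :
    ∑ k ∈ range N, f k * greedyFill Γ k = protFn f Γ := by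
  set m := ⌊Γ⌋₊ with hm
  have hfill : ∑ k ∈ range (m + 1), f k * greedyFill Γ k = protFn f Γ := by
    rw [sum_range_succ, greedyFill_floor hΓ0, protFn, ← hm, mul_comm (f m)]
    congr 1
    exact sum_congr rfl fun k hk => by rw [greedyFill_of_lt_floor (mem_range.1 hk), mul_one]
  rcases (Nat.floor_le_of_le hΓN : m ≤ N).lt_or_eq with hmN | hmN
  · rw [← hfill]
    refine (sum_subset (range_subset_range.2 hmN) fun k _ hk => ?_).symm
    rw [greedyFill_of_floor_lt (by simpa using hk), mul_zero]
  · have hΓ : Γ - m = 0 := by linarith [hmN ▸ hΓN, Nat.floor_le hΓ0]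
    rw [← hfill, ← hmN, sum_range_succ, greedyFill_floor hΓ0, ← hm, hΓ, mul_zero, add_zero]

theorem sum_range_greedyFill {Γ : ℝ} {N : ℕ} (hΓ0 : 0 ≤ Γ) (hΓN : Γ ≤ N) :
    ∑ k ∈ range N, greedyFill Γ k = Γ := by
  simpa [protFn] using sum_range_mul_greedyFill hΓ0 hΓN fun _ => 1

theorem protFn_monotoneOn {w : ℕ → ℝ} (hw : ∀ k, 0 ≤ w k) :
    MonotoneOn (protFn w) (Set.Ici 0) := by
  intro x hx y hy hxy
  have hyN : y ≤ ⌈y⌉₊ := Nat.le_ceil y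
  rw [← sum_range_mul_greedyFill hx (hxy.trans hyN), ← sum_range_mul_greedyFill hy hyN]
  gcongr with k
  · exact hw k
  · exact greedyFill_mono_left k hxy

theorem sum_range_mul_le_protFn {w v : ℕ → ℝ} {N : ℕ} (hw : Antitone w)
    (hv : ∀ k ∈ range N, 0 ≤ v k ∧ v k ≤ 1) :
    ∑ k ∈ range N, w k * v k ≤ protFn w (∑ k ∈ range N, v k) := by
  set r := ∑ k ∈ range N, v k with hr
  have hr0 : 0 ≤ r := sum_nonneg fun k hk => (hv k hk).1
  have hrN : r ≤ N := by simpa using sum_le_sum fun k hk => (hv k hk).2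
  set m := ⌊r⌋₊ with hm
  have hmN : m ≤ N := Nat.floor_le_of_le hrN
  -- Exchange argument: mass below `m` may be raised to `1`, mass above `m` moved to `m`.
  have hlow : ∀ k ∈ range m, w k * v k ≤ w k + w m * (v k - 1) := fun k hk => by
    have hwk : w m ≤ w k := hw (mem_range.1 hk).le
    have hvk := hv k (mem_range.2 ((mem_range.1 hk).trans_le hmN))
    nlinarith
  have hhigh : ∀ k ∈ Ico m N, w k * v k ≤ w m * v k := fun k hk =>
    mul_le_mul_of_nonneg_right (hw (mem_Ico.1 hk).1) (hv k (mem_range.2 (mem_Ico.1 hk).2)).1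
  calc ∑ k ∈ range N, w k * v k
      = ∑ k ∈ range m, w k * v k + ∑ k ∈ Ico m N, w k * v k := (sum_range_add_sum_Ico _ hmN).symm
    _ ≤ ∑ k ∈ range m, (w k + w m * (v k - 1)) + ∑ k ∈ Ico m N, w m * v k :=
      add_le_add (sum_le_sum hlow) (sum_le_sum hhigh)
    _ = protFn w r := by
      rw [protFn, ← hm, hr, ← sum_range_add_sum_Ico v hmN]
      simp only [sum_add_distrib, mul_sub, sum_sub_distrib, ← mul_sum, sum_const, card_range,
        nsmul_eq_mul, mul_one]
      ring

theorem isLeast_sum_of_isLeast_protFn {w : ℕ → ℝ} {N : ℕ} {S Γmin : ℝ} (hw0 : ∀ k, 0 ≤ w k)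
    (hw : Antitone w) (hΓmin : IsLeast {Γ | Γ ∈ Set.Icc (0 : ℝ) N ∧ protFn w Γ = S} Γmin) :
    IsLeast {r | ∃ v : ℕ → ℝ, (∀ k ∈ range N, 0 ≤ v k ∧ v k ≤ 1) ∧
      ∑ k ∈ range N, w k * v k = S ∧ r = ∑ k ∈ range N, v k} Γmin := by
  obtain ⟨⟨⟨hΓ0, hΓN⟩, hPΓ⟩, hleast⟩ := hΓmin
  refine ⟨⟨greedyFill Γmin, fun k _ => greedyFill_mem_Icc,
    by rw [sum_range_mul_greedyFill hΓ0 hΓN, hPΓ], (sum_range_greedyFill hΓ0 hΓN).symm⟩, ?_⟩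
  rintro _ ⟨v, hv, hS, rfl⟩
  by_contra! hlt
  have hr0 : 0 ≤ ∑ k ∈ range N, v k := sum_nonneg fun k hk => (hv k hk).1
  have hrN : ∑ k ∈ range N, v k ≤ N := by simpa using sum_le_sum fun k hk => (hv k hk).2
  have hPr : protFn w (∑ k ∈ range N, v k) = S :=
    le_antisymm (hPΓ ▸ protFn_monotoneOn hw0 hr0 hΓ0 hlt.le) (hS ▸ sum_range_mul_le_protFn hw hv)
  exact hlt.not_ge (hleast ⟨⟨hr0, hrN⟩, hPr⟩)

theorem Set.BijOn.exists_mem_Icc_sum_iff {ι κ : Type*} [Nonempty κ] {s : Finset κ} {t : Finset ι}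
    {e : κ → ι} (he : Set.BijOn e s t) {c : ι → ℝ} {w : κ → ℝ} (hcw : ∀ k ∈ s, c (e k) = w k)
    (S r : ℝ) :
    (∃ φ : ι → ℝ, (∀ j ∈ t, 0 ≤ φ j ∧ φ j ≤ 1) ∧ ∑ j ∈ t, c j * φ j = S ∧ r = ∑ j ∈ t, φ j) ↔
      ∃ v : κ → ℝ, (∀ k ∈ s, 0 ≤ v k ∧ v k ≤ 1) ∧ ∑ k ∈ s, w k * v k = S ∧ r = ∑ k ∈ s, v k := by
  have hsum (g : ι → ℝ) : ∑ k ∈ s, g (e k) = ∑ j ∈ t, g j :=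
    sum_nbij e he.mapsTo he.injOn he.surjOn fun _ _ => rfl
  constructor
  · rintro ⟨φ, hφ, hS, hr⟩
    refine ⟨φ ∘ e, fun k hk => hφ _ (he.mapsTo hk), ?_, by rw [hr, ← hsum]; rfl⟩
    rw [← hS, ← hsum]
    exact sum_congr rfl fun k hk => by rw [Function.comp_apply, hcw k hk]
  · rintro ⟨v, hv, hS, hr⟩
    have hinv := he.invOn_invFunOn
    refine ⟨v ∘ Function.invFunOn e s, fun j hj => hv _ ((he.symm hinv.symm).mapsTo hj), ?_, ?_⟩
    · rw [← hS, ← hsum]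
      exact sum_congr rfl fun k hk => by simp [hcw k hk, hinv.1 hk]
    · rw [hr, ← hsum]
      exact sum_congr rfl fun k hk => by simp [hinv.1 hk]

theorem stmt_17_general {n : ℕ} (xh a : Fin n → ℝ) (b : ℝ) (J' : Finset (Fin n))
    (α : Fin n → ℝ)
    (w : ℕ → ℝ) (e : ℕ → Fin n)
    (he_mem : ∀ k < J'.card, e k ∈ J')
    (he_inj : ∀ k < J'.card, ∀ l < J'.card, e k = e l → k = l)
    (he_surj : ∀ j ∈ J', ∃ k < J'.card, e k = j)
    (hw_def : ∀ k < J'.card, w k = α (e k) * |xh (e k)|)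
    (hw_zero : ∀ k, J'.card ≤ k → w k = 0)
    (hsort : ∀ k l, k ≤ l → w l ≤ w k)
    (Γmin : ℝ)
    (hΓmin : IsLeast {Γ | Γ ∈ Set.Icc (0 : ℝ) (J'.card : ℝ) ∧
        protFn w Γ = (∑ j, a j * xh j) - b} Γmin) :
    IsLeast {r | ∃ φ : Fin n → ℝ, (∀ j ∈ J', 0 ≤ φ j ∧ φ j ≤ 1) ∧
        (∑ j ∈ J', α j * |xh j| * φ j = (∑ j, a j * xh j) - b) ∧
        r = ∑ j ∈ J', φ j} Γmin := by
  set N := J'.card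
  have hw0 : ∀ k, 0 ≤ w k := fun k =>
    (hw_zero _ (le_max_right k N)).symm.le.trans (hsort _ _ (le_max_left k N))
  have he : Set.BijOn e (range N) J' :=
    ⟨fun k hk => he_mem k (mem_range.1 hk),
      fun k hk l hl => he_inj k (mem_range.1 hk) l (mem_range.1 hl),
      fun j hj => let ⟨k, hk, hkj⟩ := he_surj j hj; ⟨k, mem_range.2 hk, hkj⟩⟩
  convert isLeast_sum_of_isLeast_protFn hw0 hsort hΓmin using 1
  ext r
  exact he.exists_mem_Icc_sum_iff (c := fun j => α j * |xh j|)
    (fun k hk => (hw_def k (mem_range.1 hk)).symm) _ _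

/-- The LP computing the critical budget Γ̲ equals the smallest Γ with
P(Γ) = aᵀxh − b. -/
theorem stmt_17 {n : ℕ} (xh a : Fin n → ℝ) (b : ℝ) (J' : Finset (Fin n))
    (α : Fin n → ℝ) (hα : ∀ j, 0 ≤ α j)
    (w : ℕ → ℝ) (e : ℕ → Fin n)
    (he_mem : ∀ k < J'.card, e k ∈ J')
    (he_inj : ∀ k < J'.card, ∀ l < J'.card, e k = e l → k = l)
    (he_surj : ∀ j ∈ J', ∃ k < J'.card, e k = j)
    (hw_def : ∀ k < J'.card, w k = α (e k) * |xh (e k)|)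
    (hw_zero : ∀ k, J'.card ≤ k → w k = 0)
    (hsort : ∀ k l, k ≤ l → w l ≤ w k)
    (hS0 : 0 ≤ (∑ j, a j * xh j) - b)
    (hS1 : (∑ j, a j * xh j) - b ≤ ∑ j ∈ J', α j * |xh j|)
    (Γmin : ℝ)
    (hΓmin : IsLeast {Γ | Γ ∈ Set.Icc (0 : ℝ) (J'.card : ℝ) ∧
        protFn w Γ = (∑ j, a j * xh j) - b} Γmin) :
    IsLeast {r | ∃ φ : Fin n → ℝ, (∀ j ∈ J', 0 ≤ φ j ∧ φ j ≤ 1) ∧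
        (∑ j ∈ J', α j * |xh j| * φ j = (∑ j, a j * xh j) - b) ∧
        r = ∑ j ∈ J', φ j} Γmin :=
  stmt_17_general xh a b J' α w e he_mem he_inj he_surj hw_def hw_zero hsort Γmin hΓmin
end

section
/- Let x̂ ∈ ℝⁿ, A ∈ ℝ^{m×n}, b ∈ ℝᵐ, index sets Jᵢ, fixed nonnegative αᵢⱼ, and for each i let Γ̲ᵢ be the unique budget making constraint i active at x̂ when the nominal surplus satisfies 0 ≤ Σⱼaᵢⱼx̂ⱼ − bᵢ ≤ Σ_{j∈Jᵢ}αᵢⱼ|x̂ⱼ| (i ∈ Î), and let Θ = {Γ : Γᵢ ∈ [0, Γ̲ᵢ] for i ∈ Î, Γᵢ ∈ [0, |Jᵢ|] for i ∉ Î}. If Σⱼaᵢⱼx̂ⱼ ≥ bᵢ for all i and Γ ∈ Θ, then there exist (u, y, z) with: αᵢⱼx̂ⱼ + uᵢⱼ ≥ 0, −αᵢⱼx̂ⱼ + uᵢⱼ ≥ 0, yᵢⱼ + z ᵢ ≥ uᵢⱼ, Σⱼaᵢⱼx̂ⱼ − Σ_{j∈Jᵢ}yᵢⱼ − Γᵢzᵢ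 ≥ bᵢ, and yᵢⱼ, zᵢ ≥ 0 for all j ∈ Jᵢ, i. Conversely, if such (u, y, z) exist for Γ ∈ [0,|Jᵢ|]ᵐ, then Γ ∈ Θ. -/
/-!
The protection function `prot J w Γ` is a fractional knapsack value, and the robust counterpart
constraints say exactly that `(y, z)` is feasible for its LP dual with objective `∑ y + Γ z`.
Weak duality turns any feasible `(u, y, z)` into `prot Γ ≤ ∑ⱼ aᵢⱼ x̂ⱼ - bᵢ` (the surplus);
conversely the greedy solution (fill the heaviest items first) shows that the dual value at
`z` = the `⌈Γ⌉`-th largest weight is attained, so `prot Γ ≤` surplus yields a feasible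
`(u, y, z)`. Since `prot` is monotone in `Γ`, `prot Γ ≤` surplus holds exactly for `Γ ≤ Γ̲` on
the rows of `Î`, and always on the other rows, whose surplus exceeds `∑ w ≥ prot Γ`.
-/

/-- Protection function of a cardinality constrained uncertainty set, as the optimal
value of the continuous knapsack problem with budget Γ. -/
noncomputable def prot {n : ℕ} (J : Finset (Fin n)) (w : Fin n → ℝ) (Γ : ℝ) : ℝ :=
  sSup {v | ∃ φ : Fin n → ℝ, (∀ j ∈ J, 0 ≤ φ j ∧ φ j ≤ 1) ∧
    (∑ j ∈ J, φ j ≤ Γ) ∧ v = ∑ j ∈ J, w j * φ j}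

open Finset

section Knapsack

variable {n : ℕ} {J : Finset (Fin n)} {w : Fin n → ℝ} {Γ : ℝ}

theorem le_prot {φ : Fin n → ℝ} (hφ : ∀ j ∈ J, 0 ≤ φ j ∧ φ j ≤ 1) (hΓ : ∑ j ∈ J, φ j ≤ Γ) :
    ∑ j ∈ J, w j * φ j ≤ prot J w Γ := by
  refine le_csSup ⟨∑ j ∈ J, |w j|, ?_⟩ ⟨φ, hφ, hΓ, rfl⟩
  rintro v ⟨ψ, hψ, -, rfl⟩
  refine sum_le_sum fun j hj => ?_
  calc w j * ψ j ≤ |w j| * ψ j := mul_le_mul_of_nonneg_right (le_abs_self _) (hψ j hj).1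
    _ ≤ |w j| := mul_le_of_le_one_right (abs_nonneg _) (hψ j hj).2

theorem prot_le {c : ℝ} (hΓ : 0 ≤ Γ)
    (h : ∀ φ : Fin n → ℝ, (∀ j ∈ J, 0 ≤ φ j ∧ φ j ≤ 1) → ∑ j ∈ J, φ j ≤ Γ →
      ∑ j ∈ J, w j * φ j ≤ c) :
    prot J w Γ ≤ c := by
  refine csSup_le ⟨0, 0, fun _ _ => ⟨le_rfl, zero_le_one⟩, by simpa using hΓ, by simp⟩ ?_
  rintro v ⟨φ, hφ, hsum, rfl⟩
  exact h φ hφ hsum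

theorem prot_nonneg (hΓ : 0 ≤ Γ) : 0 ≤ prot J w Γ := by
  simpa using le_prot (J := J) (w := w) (φ := 0) (fun _ _ => ⟨le_rfl, zero_le_one⟩)
    (by simpa using hΓ)

theorem prot_le_sum (hw : ∀ j ∈ J, 0 ≤ w j) (hΓ : 0 ≤ Γ) : prot J w Γ ≤ ∑ j ∈ J, w j :=
  prot_le hΓ fun _ hφ _ => sum_le_sum fun j hj => mul_le_of_le_one_right (hw j hj) (hφ j hj).2

theorem prot_mono {Γ₁ Γ₂ : ℝ} (h₀ : 0 ≤ Γ₁) (h₁₂ : Γ₁ ≤ Γ₂) : prot J w Γ₁ ≤ prot J w Γ₂ :=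
  prot_le h₀ fun _ hφ hsum => le_prot hφ (hsum.trans h₁₂)

theorem prot_le_sum_add_mul {y : Fin n → ℝ} {z : ℝ} (hΓ : 0 ≤ Γ) (hy : ∀ j ∈ J, 0 ≤ y j)
    (hz : 0 ≤ z) (hwyz : ∀ j ∈ J, w j ≤ y j + z) :
    prot J w Γ ≤ ∑ j ∈ J, y j + Γ * z := by
  refine prot_le hΓ fun φ hφ hsum => ?_
  calc ∑ j ∈ J, w j * φ j ≤ ∑ j ∈ J, (y j + φ j * z) := sum_le_sum fun j hj => by
        nlinarith [hφ j hj, hy j hj, hwyz j hj]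
    _ = ∑ j ∈ J, y j + (∑ j ∈ J, φ j) * z := by rw [sum_add_distrib, sum_mul]
    _ ≤ ∑ j ∈ J, y j + Γ * z := by gcongr

theorem mul_le_prot {j₀ : Fin n} (hj₀ : j₀ ∈ J) (hΓ₀ : 0 ≤ Γ) (hΓ₁ : Γ ≤ 1) :
    Γ * w j₀ ≤ prot J w Γ := by
  have hφ : ∀ j ∈ J, 0 ≤ (Pi.single j₀ Γ : Fin n → ℝ) j ∧ (Pi.single j₀ Γ : Fin n → ℝ) j ≤ 1 :=
    fun j _ => by rcases eq_or_ne j j₀ with rfl | hj <;> simp [*]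
  simpa [Pi.single_apply, hj₀, mul_comm] using le_prot (w := w) hφ (Γ := Γ) (by simp [hj₀])

theorem add_prot_erase_le {j₀ : Fin n} (hj₀ : j₀ ∈ J) (hΓ : 1 ≤ Γ) :
    w j₀ + prot (J.erase j₀) w (Γ - 1) ≤ prot J w Γ := by
  suffices prot (J.erase j₀) w (Γ - 1) ≤ prot J w Γ - w j₀ by linarith
  refine prot_le (sub_nonneg.2 hΓ) fun φ hφ hsum => ?_
  set ψ := Function.update φ j₀ 1
  have hψ : ∀ j ∈ J.erase j₀, ψ j = φ j := fun j hj =>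
    Function.update_of_ne (ne_of_mem_erase hj) _ _
  have hψ₀ : ψ j₀ = 1 := Function.update_self _ _ _
  have hψJ : ∀ j ∈ J, 0 ≤ ψ j ∧ ψ j ≤ 1 := by
    intro j hj
    rcases eq_or_ne j j₀ with rfl | hne
    · simp [hψ₀]
    · rw [hψ j (mem_erase.2 ⟨hne, hj⟩)]
      exact hφ j (mem_erase.2 ⟨hne, hj⟩)
  have key := le_prot (w := w) hψJ (Γ := Γ) (by
    rw [← add_sum_erase J _ hj₀, hψ₀, sum_congr rfl hψ]
    linarith)
  rw [← add_sum_erase J _ hj₀, hψ₀, mul_one, sum_congr rfl fun j hj => by rw [hψ j hj]] at key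
  linarith

/-- The greedy knapsack solution shows that the dual bound of `prot_le_sum_add_mul` is attained
at `y j = max (w j - z) 0`, with `z` the `⌈Γ⌉`-th largest weight. Bounding `z` by every
nonnegative upper bound of `w` is the invariant the induction needs: spending one unit of budget
on a heaviest item `j₀` then costs exactly `max (w j₀ - z) 0 + z = w j₀`. -/
theorem exists_sum_max_add_mul_le_prot (hw : ∀ j ∈ J, 0 ≤ w j) (hΓ : 0 ≤ Γ)
    (hΓJ : Γ ≤ #J) :
    ∃ z, 0 ≤ z ∧ (∀ c, 0 ≤ c → (∀ j ∈ J, w j ≤ c) → z ≤ c) ∧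
      ∑ j ∈ J, max (w j - z) 0 + Γ * z ≤ prot J w Γ := by
  induction J using Finset.strongInduction generalizing Γ with
  | H J ih =>
  rcases J.eq_empty_or_nonempty with rfl | hJ
  · exact ⟨0, le_rfl, fun c hc _ => hc, by simpa using prot_nonneg hΓ⟩
  obtain ⟨j₀, hj₀, hmax⟩ := J.exists_max_image w hJ
  rcases lt_or_ge Γ 1 with hΓ₁ | hΓ₁
  · refine ⟨w j₀, hw j₀ hj₀, fun c _ hc => hc j₀ hj₀, ?_⟩
    rw [sum_eq_zero fun j hj => max_eq_right (sub_nonpos.2 (hmax j hj)), zero_add]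
    exact mul_le_prot hj₀ hΓ hΓ₁.le
  have hcard : (#(J.erase j₀) : ℝ) + 1 = #J := by exact_mod_cast card_erase_add_one hj₀
  obtain ⟨z, hz, hzc, hdual⟩ := ih (J.erase j₀) (erase_ssubset hj₀)
    (fun j hj => hw j (mem_of_mem_erase hj)) (sub_nonneg.2 hΓ₁) (by linarith)
  have hzj₀ : z ≤ w j₀ := hzc _ (hw j₀ hj₀) fun j hj => hmax j (mem_of_mem_erase hj)
  refine ⟨z, hz, fun c hc hcJ => hzc c hc fun j hj => hcJ j (mem_of_mem_erase hj), ?_⟩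
  rw [← add_sum_erase J _ hj₀, max_eq_left (sub_nonneg.2 hzj₀)]
  linarith [add_prot_erase_le (w := w) hj₀ hΓ₁]

end Knapsack

section RobustRow

variable {n : ℕ} {J : Finset (Fin n)} {α x : Fin n → ℝ} {Γ : ℝ}

theorem prot_le_of_robust_row {u y : Fin n → ℝ} {z : ℝ} (hΓ : 0 ≤ Γ)
    (hu₁ : ∀ j ∈ J, α j * x j + u j ≥ 0) (hu₂ : ∀ j ∈ J, -(α j) * x j + u j ≥ 0)
    (hyz : ∀ j ∈ J, y j + z ≥ u j) (hy : ∀ j ∈ J, 0 ≤ y j) (hz : 0 ≤ z) :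
    prot J (fun j => α j * |x j|) Γ ≤ ∑ j ∈ J, y j + Γ * z := by
  refine prot_le_sum_add_mul hΓ hy hz fun j hj => ?_
  have := hu₁ j hj
  have := hu₂ j hj
  have := hyz j hj
  rcases abs_cases (x j) with ⟨h, -⟩ | ⟨h, -⟩ <;> rw [h] <;> linarith

theorem exists_robust_row (hα : ∀ j, 0 ≤ α j) (hΓ : 0 ≤ Γ) (hΓJ : Γ ≤ #J) {s : ℝ}
    (hs : prot J (fun j => α j * |x j|) Γ ≤ s) :
    ∃ (u y : Fin n → ℝ) (z : ℝ),
      (∀ j ∈ J, α j * x j + u j ≥ 0) ∧ (∀ j ∈ J, -(α j) * x j + u j ≥ 0) ∧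
      (∀ j ∈ J, y j + z ≥ u j) ∧ ∑ j ∈ J, y j + Γ * z ≤ s ∧
      (∀ j ∈ J, 0 ≤ y j) ∧ 0 ≤ z := by
  obtain ⟨z, hz, -, hdual⟩ := exists_sum_max_add_mul_le_prot
    (fun j _ => mul_nonneg (hα j) (abs_nonneg (x j))) hΓ hΓJ
  refine ⟨fun j => α j * |x j|, fun j => max (α j * |x j| - z) 0, z, fun j _ => ?_,
    fun j _ => ?_, fun j _ => by linarith [le_max_left (α j * |x j| - z) 0], hdual.trans hs,
    fun j _ => le_max_right _ _, hz⟩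
  · nlinarith [hα j, neg_abs_le (x j)]
  · nlinarith [hα j, le_abs_self (x j)]

end RobustRow

/-- Primal feasibility of the linearized Bertsimas–Sim robust counterpart at xh is
characterized by the budget box Θ defined via the critical budgets Γ̲ᵢ. -/
theorem stmt_18 {n m : ℕ} (xh : Fin n → ℝ) (A : Matrix (Fin m) (Fin n) ℝ)
    (b : Fin m → ℝ) (J : Fin m → Finset (Fin n)) (α : Fin m → Fin n → ℝ)
    (hα : ∀ i j, 0 ≤ α i j)
    (Ihat : Finset (Fin m))
    (hIhat : ∀ i, i ∈ Ihat ↔ (0 ≤ (∑ j, A i j * xh j) - b i ∧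
        (∑ j, A i j * xh j) - b i ≤ ∑ j ∈ J i, α i j * |xh j|))
    (Γlow : Fin m → ℝ)
    (hΓlow_mem : ∀ i ∈ Ihat, 0 ≤ Γlow i ∧ Γlow i ≤ ((J i).card : ℝ))
    (hΓlow_act : ∀ i ∈ Ihat,
        prot (J i) (fun j => α i j * |xh j|) (Γlow i) = (∑ j, A i j * xh j) - b i)
    (hΓlow_unique : ∀ i ∈ Ihat, ∀ Γ ∈ Set.Icc (0 : ℝ) ((J i).card : ℝ),
        prot (J i) (fun j => α i j * |xh j|) Γ = (∑ j, A i j * xh j) - b i → Γ = Γlow i)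
    (Γ : Fin m → ℝ) :
    (((∀ i, ∑ j, A i j * xh j ≥ b i) ∧
      (∀ i ∈ Ihat, 0 ≤ Γ i ∧ Γ i ≤ Γlow i) ∧
      (∀ i ∉ Ihat, 0 ≤ Γ i ∧ Γ i ≤ ((J i).card : ℝ))) →
      ∃ (u y : Fin m → Fin n → ℝ) (z : Fin m → ℝ),
        (∀ i, ∀ j ∈ J i, α i j * xh j + u i j ≥ 0) ∧
        (∀ i, ∀ j ∈ J i, -(α i j) * xh j + u i j ≥ 0) ∧
        (∀ i, ∀ j ∈ J i, y i j + z i ≥ u i j) ∧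
        (∀ i, (∑ j, A i j * xh j) - (∑ j ∈ J i, y i j) - Γ i * z i ≥ b i) ∧
        (∀ i, ∀ j ∈ J i, 0 ≤ y i j) ∧ (∀ i, 0 ≤ z i)) ∧
    (((∀ i, 0 ≤ Γ i ∧ Γ i ≤ ((J i).card : ℝ)) ∧
      ∃ (u y : Fin m → Fin n → ℝ) (z : Fin m → ℝ),
        (∀ i, ∀ j ∈ J i, α i j * xh j + u i j ≥ 0) ∧
        (∀ i, ∀ j ∈ J i, -(α i j) * xh j + u i j ≥ 0) ∧
        (∀ i, ∀ j ∈ J i, y i j + z i ≥ u i j) ∧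
        (∀ i, (∑ j, A i j * xh j) - (∑ j ∈ J i, y i j) - Γ i * z i ≥ b i) ∧
        (∀ i, ∀ j ∈ J i, 0 ≤ y i j) ∧ (∀ i, 0 ≤ z i)) →
      ((∀ i ∈ Ihat, 0 ≤ Γ i ∧ Γ i ≤ Γlow i) ∧
       (∀ i ∉ Ihat, 0 ≤ Γ i ∧ Γ i ≤ ((J i).card : ℝ)))) := by
  constructor
  · rintro ⟨hs, hΓin, hΓout⟩
    have hbox (i : Fin m) : 0 ≤ Γ i ∧ Γ i ≤ (#(J i) : ℝ) := by
      by_cases hi : i ∈ Ihat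
      · exact ⟨(hΓin i hi).1, (hΓin i hi).2.trans (hΓlow_mem i hi).2⟩
      · exact hΓout i hi
    have hprot (i : Fin m) :
        prot (J i) (fun j => α i j * |xh j|) (Γ i) ≤ (∑ j, A i j * xh j) - b i := by
      by_cases hi : i ∈ Ihat
      · exact (prot_mono (hΓin i hi).1 (hΓin i hi).2).trans_eq (hΓlow_act i hi)
      · refine (prot_le_sum (fun j _ => mul_nonneg (hα i j) (abs_nonneg _)) (hbox i).1).trans ?_
        exact (not_le.1 fun hle => hi ((hIhat i).2 ⟨sub_nonneg.2 (hs i), hle⟩)).le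
    choose u y z hu₁ hu₂ hyz hsum hy hz using fun i =>
      exists_robust_row (hα i) (hbox i).1 (hbox i).2 (hprot i)
    exact ⟨u, y, z, hu₁, hu₂, hyz, fun i => by linarith [hsum i], hy, hz⟩
  · rintro ⟨hbox, u, y, z, hu₁, hu₂, hyz, hsum, hy, hz⟩
    refine ⟨fun i hi => ⟨(hbox i).1, ?_⟩, fun i _ => hbox i⟩
    have hle : prot (J i) (fun j => α i j * |xh j|) (Γ i) ≤ (∑ j, A i j * xh j) - b i :=
      (prot_le_of_robust_row (hbox i).1 (hu₁ i) (hu₂ i) (hyz i) (hy i) (hz i)).trans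
        (by linarith [hsum i])
    by_contra! hgt
    have hact : prot (J i) (fun j => α i j * |xh j|) (Γ i) = (∑ j, A i j * xh j) - b i :=
      hle.antisymm ((hΓlow_act i hi).symm.trans_le (prot_mono (hΓlow_mem i hi).1 hgt.le))
    exact hgt.ne' (hΓlow_unique i hi (Γ i) (hbox i) hact)
end

section
/- Let Î ⊆ {1,…,m} be nonempty, Γ̂ ∈ ℝᵐ with Γ̂ᵢ ∈ [0, |Jᵢ|], Γ̲ᵢ ∈ [0, |Jᵢ|] for i ∈ Î, and fix a norm ‖·‖ on ℝᵐ. Define fᵢ = Γ̲ᵢ − Γ̂ᵢ for i ∈ Î and fᵢ = 0 otherwise, and gᵢ = min{fᵢ, 0}. Then the minimum of ‖Γ − Γ̂‖ over all Γ satisfying Γ_î = Γ̲_î for at least one î ∈ Î, Γᵢ ∈ [0, Γ̲ᵢ] for i ∈ Î, and Γᵢ ∈ [0, |Jᵢ|] for i ∉ Î, equals min_{i* ∈ Î} ‖g + (f_{i*} − g_{i*}) e_{i*}‖, attained at Γ with Γ_{i*} = Γ̲_{i*}, Γᵢ = min{Γ̂ᵢ, Γ̲ᵢ} for i ∈ Î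 \ {i*}, and Γᵢ = Γ̂ᵢ for i ∉ Î. -/
/-- Minimal perturbation of a prior budget vector Γ̂ pinning one component to its
critical value (core of the RLO-CCU-SD theorem), for a monotone norm. -/
theorem stmt_19 {m n : ℕ} (J : Fin m → Finset (Fin n))
    (Ihat : Finset (Fin m)) (hIhat : Ihat.Nonempty)
    (Γhat Γlow : Fin m → ℝ)
    (hΓhat : ∀ i, 0 ≤ Γhat i ∧ Γhat i ≤ ((J i).card : ℝ))
    (hΓlow : ∀ i ∈ Ihat, 0 ≤ Γlow i ∧ Γlow i ≤ ((J i).card : ℝ))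
    (N : (Fin m → ℝ) → ℝ)
    (hN_add : ∀ u v, N (u + v) ≤ N u + N v)
    (hN_smul : ∀ (t : ℝ) u, N (t • u) = |t| * N u)
    (hN_pos : ∀ u, u ≠ 0 → 0 < N u)
    (hN_mono : ∀ u v : Fin m → ℝ, (∀ i, |u i| ≤ |v i|) → N u ≤ N v)
    (f g : Fin m → ℝ)
    (hf : ∀ i, f i = if i ∈ Ihat then Γlow i - Γhat i else 0)
    (hg : ∀ i, g i = min (f i) 0)
    (istar : Fin m) (histar_mem : istar ∈ Ihat)
    (histar : ∀ i ∈ Ihat, N (g + (f istar - g istar) • (Pi.single istar 1 : Fin m → ℝ))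
        ≤ N (g + (f i - g i) • (Pi.single i 1 : Fin m → ℝ))) :
    IsLeast {r | ∃ Γ : Fin m → ℝ, (∃ ihat ∈ Ihat, Γ ihat = Γlow ihat) ∧
        (∀ i ∈ Ihat, 0 ≤ Γ i ∧ Γ i ≤ Γlow i) ∧
        (∀ i ∉ Ihat, 0 ≤ Γ i ∧ Γ i ≤ ((J i).card : ℝ)) ∧
        r = N (Γ - Γhat)}
      (N (g + (f istar - g istar) • (Pi.single istar 1 : Fin m → ℝ))) ∧
    (let Γopt : Fin m → ℝ := fun i =>
        if i = istar then Γlow istar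
        else if i ∈ Ihat then min (Γhat i) (Γlow i) else Γhat i
     (∃ ihat ∈ Ihat, Γopt ihat = Γlow ihat) ∧
     (∀ i ∈ Ihat, 0 ≤ Γopt i ∧ Γopt i ≤ Γlow i) ∧
     (∀ i ∉ Ihat, 0 ≤ Γopt i ∧ Γopt i ≤ ((J i).card : ℝ)) ∧
     N (Γopt - Γhat) = N (g + (f istar - g istar) • (Pi.single istar 1 : Fin m → ℝ))) := by
  have hvj : ∀ (i j : Fin m), (g + (f i - g i) • (Pi.single i 1 : Fin m → ℝ)) j
      = g j + (f i - g i) * (if j = i then 1 else 0) := by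
    intro i j; simp [Pi.single_apply]
  have hgout : ∀ j, j ∉ Ihat → g j = 0 := by
    intro j hj; simp [hg, hf, hj]
  set Γopt : Fin m → ℝ := fun i =>
      if i = istar then Γlow istar
      else if i ∈ Ihat then min (Γhat i) (Γlow i) else Γhat i with hΓoptdef
  have hΓopt_mem : ∀ i ∈ Ihat, 0 ≤ Γopt i ∧ Γopt i ≤ Γlow i := by
    intro i hi
    by_cases hii : i = istar
    · subst hii
      simp only [hΓoptdef, if_pos rfl]
      exact ⟨(hΓlow i hi).1, le_rfl⟩
    · simp only [hΓoptdef, if_neg hii, if_pos hi]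
      exact ⟨le_min (hΓhat i).1 (hΓlow i hi).1, min_le_right _ _⟩
  have hΓopt_out : ∀ i ∉ Ihat, 0 ≤ Γopt i ∧ Γopt i ≤ ((J i).card : ℝ) := by
    intro i hi
    have hii : i ≠ istar := fun h => hi (h ▸ histar_mem)
    simpa [Γopt, hii, hi] using hΓhat i
  have hdiff : Γopt - Γhat = g + (f istar - g istar) • (Pi.single istar 1 : Fin m → ℝ) := by
    funext j
    rw [Pi.sub_apply, hvj istar j]
    by_cases hj : j = istar
    · subst hj
      rw [if_pos rfl, mul_one]
      have h1 : Γopt j = Γlow j := by simp [hΓoptdef]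
      have h2 : f j = Γlow j - Γhat j := by rw [hf j, if_pos histar_mem]
      rw [h1]; linarith
    · by_cases hj2 : j ∈ Ihat
      · rw [if_neg hj, mul_zero, add_zero]
        have h1 : Γopt j = min (Γhat j) (Γlow j) := by simp [hΓoptdef, hj, hj2]
        have h2 : f j = Γlow j - Γhat j := by rw [hf j, if_pos hj2]
        rw [h1, hg j, h2]
        rcases le_total (Γhat j) (Γlow j) with h | h
        · rw [min_eq_left h, min_eq_right (by linarith)]; ring
        · rw [min_eq_right h, min_eq_left (by linarith)]
      · rw [if_neg hj, mul_zero, add_zero, hgout j hj2]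
        have h1 : Γopt j = Γhat j := by simp [hΓoptdef, hj, hj2]
        rw [h1]; ring
  constructor
  · constructor
    · exact ⟨Γopt, ⟨istar, histar_mem, by simp [Γopt]⟩, hΓopt_mem, hΓopt_out, by rw [hdiff]⟩
    · rintro r ⟨Γ, ⟨ihat, hih, hΓih⟩, hbox, hout, rfl⟩
      refine le_trans (histar ihat hih) (hN_mono _ _ ?_)
      intro j
      rw [hvj ihat j, Pi.sub_apply]
      by_cases hj : j = ihat
      · subst hj
        rw [if_pos rfl, mul_one, hΓih]
        have : g j + (f j - g j) = Γlow j - Γhat j := by rw [hf j, if_pos hih]; ring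
        rw [this]
      · rw [if_neg hj, mul_zero, add_zero]
        by_cases hj2 : j ∈ Ihat
        · have h1 := hbox j hj2
          have h2 := hg j
          have h3 : f j = Γlow j - Γhat j := by rw [hf j, if_pos hj2]
          rcases le_total (Γlow j) (Γhat j) with h | h
          · have : g j = Γlow j - Γhat j := by rw [h2, h3]; exact min_eq_left (by linarith)
            rw [this, abs_of_nonpos (by linarith), abs_of_nonpos (by linarith)]
            simp only [neg_sub]
            linarith
          · have : g j = 0 := by rw [h2, h3]; exact min_eq_right (by linarith)
            rw [this]; simp
        · rw [hgout j hj2]; simp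
  · exact ⟨⟨istar, histar_mem, by simp [hΓoptdef]⟩, hΓopt_mem, hΓopt_out, by rw [hdiff]⟩
end
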